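/- Assume the axiomatic framework (A1)–(A5) for a dominant λ ∈ 𝔥*. Let α ∈ Π_λ, w ∈ W_λ, and μ ∈ 𝒟, and assume ⟨α,wλ⟩ = 0. Then M_λ(w,μ) ≅ M_λ(w,s_αμ) ≅ M_λ(s_αw,μ) ≅ M_λ(s_αw,s_αμ) in 𝒞. -/

import Mathlib

noncomputable section

open Complex

namespace Paper

variable {V : Type} [AddCommGroup V] [Module ℂ V]

/-- Data of the root system `Δ` of a complex semisimple Lie algebra inside `𝔥* = V`,
together with the (Killing-form induced) symmetric nondegenerate bilinear form and
a fixed positive system `Pos = Δ⁺`. -/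
structure RootDatum (V : Type) [AddCommGroup V] [Module ℂ V] : Type where
  /-- the bilinear form `⟨·,·⟩` on `𝔥*` induced by the Killing form -/
  B : V →ₗ[ℂ] V →ₗ[ℂ] ℂ
  Bsymm : ∀ x y, B x y = B y x
  Bnondeg : ∀ x, (∀ y, B x y = 0) → x = 0
  /-- the set of roots -/
  Δ : Set V
  finite : Δ.Finite
  zero_not_mem : (0 : V) ∉ Δ
  root_self_ne : ∀ α ∈ Δ, B α α ≠ 0
  neg_mem : ∀ α ∈ Δ, -α ∈ Δ
  refl_mem : ∀ α ∈ Δ, ∀ β ∈ Δ, β - ((2 / B α α) * B α β) • α ∈ Δ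
  pair_int : ∀ α ∈ Δ, ∀ β ∈ Δ, ∃ n : ℤ, (2 / B α α) * B α β = (n : ℂ)
  /-- the positive system `Δ⁺` -/
  Pos : Set V
  pos_subset : Pos ⊆ Δ
  pos_total : ∀ α ∈ Δ, α ∈ Pos ∨ -α ∈ Pos
  pos_not_neg : ∀ α ∈ Pos, -α ∉ Pos
  pos_closed : ∀ α ∈ Pos, ∀ β ∈ Pos, α + β ∈ Δ → α + β ∈ Pos

namespace RootDatum

variable (rd : RootDatum V)

/-- `⟨α̌, μ⟩` where `α̌ = 2α/⟨α,α⟩`. -/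
def pair (α μ : V) : ℂ := (2 / rd.B α α) * rd.B α μ

/-- The reflection `s_α` as a linear map:  `s_α(μ) = μ - ⟨α̌,μ⟩ α`. -/
def sLin (α : V) : V →ₗ[ℂ] V :=
  LinearMap.id - (2 / rd.B α α) • ((LinearMap.toSpanSingleton ℂ V α).comp (rd.B α))

lemma sLin_apply (α μ : V) : rd.sLin α μ = μ - rd.pair α μ • α := by
  simp [sLin, pair, LinearMap.toSpanSingleton, sub_eq_add_neg, mul_smul]

lemma s_involutive (α : V) : Function.Involutive (rd.sLin α) := by
  intro μ
  rw [rd.sLin_apply, rd.sLin_apply]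
  by_cases h : rd.B α α = 0
  · simp [pair, h]
  · have h1 : rd.pair α (μ - rd.pair α μ • α) = - rd.pair α μ := by
      simp only [pair, map_sub, map_smul]
      field_simp
      rw [smul_eq_mul, div_mul_cancel₀ _ h]
      ring
    rw [h1]
    module

/-- The reflection `s_α ∈ GL(𝔥*)`. -/
def s (α : V) : V ≃ₗ[ℂ] V :=
  LinearEquiv.ofInvolutive (rd.sLin α) (rd.s_involutive α)

lemma s_apply (α μ : V) : rd.s α μ = μ - rd.pair α μ • α := rd.sLin_apply α μ

/-- The Weyl group `W`, as the subgroup of `GL(𝔥*)` generated by the reflections. -/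
def W : Subgroup (V ≃ₗ[ℂ] V) := Subgroup.closure {g | ∃ α ∈ rd.Δ, g = rd.s α}

/-- `⟨α̌, μ⟩ ∈ ℤ` -/
def pairInt (α μ : V) : Prop := ∃ n : ℤ, rd.pair α μ = (n : ℂ)

/-- `⟨α̌, μ⟩ ∈ ℤ_{<0}` -/
def pairNegInt (α μ : V) : Prop := ∃ n : ℤ, n < 0 ∧ rd.pair α μ = (n : ℂ)

/-- the integral weight lattice `𝒫` -/
def P : Set V := {μ | ∀ α ∈ rd.Δ, rd.pairInt α μ}

/-- the integral root system `Δ_λ` -/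
def Δint (lam : V) : Set V := {α ∈ rd.Δ | rd.pairInt α lam}

/-- the integral Weyl group `W_λ = {w ∈ W ∣ wλ - λ ∈ 𝒫}` (as a subset of `GL(𝔥*)`) -/
def Wint (lam : V) : Set (V ≃ₗ[ℂ] V) := {w | w ∈ rd.W ∧ w lam - lam ∈ rd.P}

/-- `Δ_λ⁺ = Δ⁺ ∩ Δ_λ` -/
def PosInt (lam : V) : Set V := rd.Pos ∩ rd.Δint lam

/-- the simple roots `Π_λ` of `Δ_λ⁺`, i.e. the indecomposable positive roots -/
def SimpleInt (lam : V) : Set V :=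
  {α ∈ rd.PosInt lam | ¬ ∃ β ∈ rd.PosInt lam, ∃ γ ∈ rd.PosInt lam, α = β + γ}

/-- `W_λ⁰ = {w ∈ W_λ ∣ wλ = λ}` -/
def Wint0 (lam : V) : Set (V ≃ₗ[ℂ] V) := {w ∈ rd.Wint lam | w lam = lam}

/-- the length `ℓ_λ(w) = #(Δ_λ⁺ ∩ w⁻¹ Δ⁻)` of `w` as an element of `W_λ` -/
def lenInt (lam : V) (w : V ≃ₗ[ℂ] V) : ℕ :=
  Set.ncard {α | α ∈ rd.PosInt lam ∧ -(w α) ∈ rd.Pos}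

/-- `w` is the longest element `w_λ` of `W_λ`:  `w ∈ W_λ` and `w(Δ_λ⁺) = Δ_λ⁻`. -/
def IsLongest (lam : V) (w : V ≃ₗ[ℂ] V) : Prop :=
  w ∈ rd.Wint lam ∧ ∀ α ∈ rd.PosInt lam, -(w α) ∈ rd.PosInt lam

/-- `λ` is dominant: `⟨α̌,λ⟩ ∉ ℤ_{<0}` for all `α ∈ Δ⁺`. -/
def IsDominant (lam : V) : Prop := ∀ α ∈ rd.Pos, ¬ rd.pairNegInt α lam

/-- `(β_1, …, β_l)` with `β_i = s_{α_1} ⋯ s_{α_{i-1}} (α_i)`, for a sequence `(α_1, …, α_l)`. -/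
def betaList : List V → List V
  | [] => []
  | α :: L => α :: (betaList L).map (rd.s α)

/-- `s_{γ_r} ⋯ s_{γ_1} μ` for a list `(γ_1, …, γ_r)`. -/
def chainApply : List V → V → V
  | [], μ => μ
  | γ :: t, μ => chainApply t (rd.s γ μ)

/-- the condition `⟨γ̌_k, s_{γ_{k-1}} ⋯ s_{γ_1} μ⟩ ∈ ℤ_{<0}` for all `k`. -/
def chainCond : List V → V → Prop
  | [], _ => True
  | γ :: t, μ => rd.pairNegInt γ μ ∧ chainCond t (rd.s γ μ)

/-- The set `A_{(s_{α_1},…,s_{α_l})}(μ)` attached to the sequence `L = (α_1, …, α_l)`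
of simple roots: all `μ' = s_{β_{i_r}} ⋯ s_{β_{i_1}} μ` where `1 ≤ i_1 < ⋯ < i_r ≤ l` and
`⟨β̌_{i_k}, s_{β_{i_{k-1}}} ⋯ s_{β_{i_1}} μ⟩ ∈ ℤ_{<0}` for all `k = 1, …, r`. -/
def Aset (L : List V) (μ : V) : Set V :=
  {μ' | ∃ γs : List V, γs.Sublist (rd.betaList L) ∧ rd.chainCond γs μ ∧ μ' = rd.chainApply γs μ}

/-- `L = (α_1, …, α_l)` gives a reduced expression `w = s_{α_1} ⋯ s_{α_l}` of `w ∈ W_λ`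
as a product of elements of `S_λ`. -/
def IsReducedWord (lam : V) (w : V ≃ₗ[ℂ] V) (L : List V) : Prop :=
  (∀ α ∈ L, α ∈ rd.SimpleInt lam) ∧ (L.map rd.s).prod = w ∧ L.length = rd.lenInt lam w

/-- The set `W_λ⁰ w⁻¹ · S = {u w⁻¹ ν ∣ u ∈ W_λ⁰, ν ∈ S}`. -/
def orbitSet (lam : V) (w : V ≃ₗ[ℂ] V) (S : Set V) : Set V :=
  {x | ∃ u ∈ rd.Wint0 lam, ∃ ν ∈ S, x = u (w⁻¹ ν)}

end RootDatum

end Paper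

/-
Since `⟨α, wλ⟩ = 0`, the reflection `s_α` fixes `wλ`, so `u = w⁻¹ s_α w ∈ W_λ⁰` and `w = (s_α w) u`;
(A1) then identifies `M_λ(w, ·)` with `M_λ(s_α w, ·)`. Because `ℓ_λ(s_α w) ≠ ℓ_λ(w)`, (A2) applies to
the shorter of `w`, `s_α w`, and to whichever of `μ`, `s_α μ` has `⟨α̌, ·⟩ ∉ ℤ_{<0}`; this gives
`M_λ(w, μ) ≅ M_λ(w, s_α μ)`, and the remaining isomorphisms follow.

The length inequality is the root-system input: `s_α` sends every positive integral root not
proportional to `α` to a positive root. This comes from unbroken `α`-strings inside `Δ_λ`, whose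
Cartan-integer bounds come from the `W`-invariant form `∑_δ ⟨δ̌,x⟩⟨δ̌,y⟩`, positive on roots.
-/

namespace Paper.RootDatum

variable {V : Type} [AddCommGroup V] [Module ℂ V] (rd : RootDatum V)

lemma pair_add (α x y : V) : rd.pair α (x + y) = rd.pair α x + rd.pair α y := by
  simp [pair, mul_add]

lemma pair_sub (α x y : V) : rd.pair α (x - y) = rd.pair α x - rd.pair α y := by
  simp [pair, mul_sub]

lemma pair_smul (α : V) (c : ℂ) (x : V) : rd.pair α (c • x) = c * rd.pair α x := by
  simp only [pair, map_smul, smul_eq_mul]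
  ring

lemma pair_neg (α x : V) : rd.pair α (-x) = -rd.pair α x := by
  simp [pair]

lemma pair_neg_left (α x : V) : rd.pair (-α) x = -rd.pair α x := by
  simp [pair]

lemma pair_smul_left (α : V) {c : ℂ} (hc : c ≠ 0) (x : V) :
    rd.pair (c • α) x = c⁻¹ * rd.pair α x := by
  by_cases h : rd.B α α = 0
  · simp [pair, h]
  · simp only [pair, map_smul, LinearMap.smul_apply, smul_eq_mul]
    field_simp

lemma pair_self {α : V} (hα : α ∈ rd.Δ) : rd.pair α α = 2 :=
  div_mul_cancel₀ _ (rd.root_self_ne α hα)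

lemma s_s (α x : V) : rd.s α (rd.s α x) = x := rd.s_involutive α x

lemma s_self {α : V} (hα : α ∈ rd.Δ) : rd.s α α = -α := by
  rw [rd.s_apply, rd.pair_self hα, two_smul]
  abel

lemma s_mem {α β : V} (hα : α ∈ rd.Δ) (hβ : β ∈ rd.Δ) : rd.s α β ∈ rd.Δ :=
  rd.s_apply α β ▸ rd.refl_mem α hα β hβ

lemma s_mul_s (α : V) : rd.s α * rd.s α = 1 :=
  LinearEquiv.ext (rd.s_s α)

lemma s_mul_s_mul (α : V) (w : V ≃ₗ[ℂ] V) : rd.s α * (rd.s α * w) = w := by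
  rw [← mul_assoc, s_mul_s, one_mul]

lemma s_inv (α : V) : (rd.s α)⁻¹ = rd.s α :=
  inv_eq_of_mul_eq_one_left (rd.s_mul_s α)

lemma B_s_s (α x y : V) : rd.B (rd.s α x) (rd.s α y) = rd.B x y := by
  by_cases h : rd.B α α = 0
  · simp [s_apply, pair, h]
  · simp only [s_apply, pair, map_sub, map_smul, LinearMap.sub_apply, LinearMap.smul_apply,
      smul_eq_mul, rd.Bsymm x α]
    field_simp
    ring

lemma pair_s_s (α x y : V) : rd.pair (rd.s α x) (rd.s α y) = rd.pair x y := by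
  simp only [pair, B_s_s]

lemma pair_s (α x y : V) : rd.pair (rd.s α x) y = rd.pair x (rd.s α y) := by
  rw [← rd.pair_s_s α x (rd.s α y), s_s]

lemma not_pairNegInt_s {α μ : V} (hα : α ∈ rd.Δ) (h : rd.pairNegInt α μ) :
    ¬ rd.pairNegInt α (rd.s α μ) := by
  obtain ⟨n, hn, hnμ⟩ := h
  rintro ⟨m, hm, hmμ⟩
  rw [s_apply, pair_sub, pair_smul, pair_self rd hα, hnμ] at hmμ
  have : -n = m := by exact_mod_cast (by push_cast; linear_combination hmμ : ((-n : ℤ) : ℂ) = m)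
  omega

section WeylGroup

variable {g : V ≃ₗ[ℂ] V}

lemma s_mem_W {α : V} (hα : α ∈ rd.Δ) : rd.s α ∈ rd.W :=
  Subgroup.subset_closure ⟨α, hα, rfl⟩

lemma B_apply_apply_of_mem_W (hg : g ∈ rd.W) (x y : V) : rd.B (g x) (g y) = rd.B x y := by
  induction hg using Subgroup.closure_induction'' generalizing x y with
  | mem _ h => obtain ⟨α, -, rfl⟩ := h; exact rd.B_s_s α x y
  | inv_mem _ h => obtain ⟨α, -, rfl⟩ := h; rw [s_inv]; exact rd.B_s_s α x y
  | one => rfl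
  | mul a b _ _ ha hb => exact (ha _ _).trans (hb x y)

lemma pair_apply_apply_of_mem_W (hg : g ∈ rd.W) (x y : V) :
    rd.pair (g x) (g y) = rd.pair x y := by
  simp only [pair, rd.B_apply_apply_of_mem_W hg]

lemma apply_mem_Δ_of_mem_W (hg : g ∈ rd.W) {β : V} (hβ : β ∈ rd.Δ) : g β ∈ rd.Δ := by
  induction hg using Subgroup.closure_induction'' generalizing β with
  | mem _ h => obtain ⟨α, hα, rfl⟩ := h; exact rd.s_mem hα hβ
  | inv_mem _ h => obtain ⟨α, hα, rfl⟩ := h; rw [s_inv]; exact rd.s_mem hα hβ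
  | one => exact hβ
  | mul a b _ _ ha hb => exact ha (hb hβ)

lemma zero_mem_P : (0 : V) ∈ rd.P :=
  fun _ _ => ⟨0, by simp [pair]⟩

lemma add_mem_P {x y : V} (hx : x ∈ rd.P) (hy : y ∈ rd.P) : x + y ∈ rd.P := by
  intro γ hγ
  obtain ⟨m, hm⟩ := hx γ hγ
  obtain ⟨n, hn⟩ := hy γ hγ
  exact ⟨m + n, by rw [pair_add, hm, hn]; push_cast; rfl⟩

lemma neg_mem_P {x : V} (hx : x ∈ rd.P) : -x ∈ rd.P := by
  intro γ hγ
  obtain ⟨n, hn⟩ := hx γ hγ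
  exact ⟨-n, by rw [pair_neg, hn]; push_cast; rfl⟩

lemma int_smul_mem_P {α : V} (hα : α ∈ rd.Δ) (n : ℤ) : (n : ℂ) • α ∈ rd.P := by
  intro γ hγ
  obtain ⟨k, hk⟩ := rd.pair_int γ hγ α hα
  exact ⟨n * k, by rw [pair_smul, pair, hk]; push_cast; rfl⟩

lemma apply_mem_P_of_mem_W (hg : g ∈ rd.W) {x : V} (hx : x ∈ rd.P) : g x ∈ rd.P := by
  intro γ hγ
  have h := rd.pair_apply_apply_of_mem_W hg (g⁻¹ γ) x
  rw [show g (g⁻¹ γ) = γ from g.apply_symm_apply γ] at h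
  obtain ⟨n, hn⟩ := hx _ (rd.apply_mem_Δ_of_mem_W (inv_mem hg) hγ)
  exact ⟨n, h.trans hn⟩

end WeylGroup

section IntegralWeylGroup

variable (lam : V) {w v : V ≃ₗ[ℂ] V}

lemma inv_mem_Wint (hw : w ∈ rd.Wint lam) : w⁻¹ ∈ rd.Wint lam := by
  refine ⟨inv_mem hw.1, ?_⟩
  have h : w⁻¹ lam - lam = -w⁻¹ (w lam - lam) := by
    rw [map_sub, show w⁻¹ (w lam) = lam from w.symm_apply_apply lam]
    abel
  exact h ▸ rd.neg_mem_P (rd.apply_mem_P_of_mem_W (inv_mem hw.1) hw.2)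

lemma mul_mem_Wint (hw : w ∈ rd.Wint lam) (hv : v ∈ rd.Wint lam) : w * v ∈ rd.Wint lam := by
  refine ⟨mul_mem hw.1 hv.1, ?_⟩
  have h : (w * v) lam - lam = w (v lam - lam) + (w lam - lam) := by
    rw [LinearEquiv.mul_apply, map_sub]
    abel
  exact h ▸ rd.add_mem_P (rd.apply_mem_P_of_mem_W hw.1 hv.2) hw.2

lemma s_mem_Wint {α : V} (hα : α ∈ rd.Δint lam) : rd.s α ∈ rd.Wint lam := by
  obtain ⟨hαΔ, n, hn⟩ := hα
  refine ⟨rd.s_mem_W hαΔ, ?_⟩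
  have h : rd.s α lam - lam = ((-n : ℤ) : ℂ) • α := by
    rw [s_apply, hn]
    push_cast
    module
  exact h ▸ rd.int_smul_mem_P hαΔ (-n)

lemma inv_mul_s_mul_mem_Wint0 {α : V} (hα : α ∈ rd.Δint lam) (hw : w ∈ rd.Wint lam)
    (hzero : rd.B α (w lam) = 0) : w⁻¹ * (rd.s α * w) ∈ rd.Wint0 lam := by
  have hfix : (w⁻¹ * (rd.s α * w)) lam = lam := by
    change w⁻¹ (rd.s α (w lam)) = lam
    rw [s_apply, pair, hzero, mul_zero, zero_smul, sub_zero]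
    exact w.symm_apply_apply lam
  refine ⟨⟨(rd.mul_mem_Wint lam (rd.inv_mem_Wint lam hw)
    (rd.mul_mem_Wint lam (rd.s_mem_Wint lam hα) hw)).1, ?_⟩, hfix⟩
  rw [hfix, sub_self]
  exact rd.zero_mem_P

lemma s_mem_Δint {α β : V} (hα : α ∈ rd.Δint lam) (hβ : β ∈ rd.Δint lam) :
    rd.s α β ∈ rd.Δint lam := by
  obtain ⟨hαΔ, m, hm⟩ := hα
  obtain ⟨hβΔ, n, hn⟩ := hβ
  obtain ⟨k, hk⟩ := rd.pair_int β hβΔ α hαΔ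
  refine ⟨rd.s_mem hαΔ hβΔ, n - m * k, ?_⟩
  rw [pair_s, s_apply, pair_sub, pair_smul, hn, hm, pair, hk]
  push_cast
  ring

lemma neg_mem_Δint {α : V} (hα : α ∈ rd.Δint lam) : -α ∈ rd.Δint lam :=
  rd.s_self hα.1 ▸ rd.s_mem_Δint lam hα hα

lemma apply_mem_Δint (hw : w ∈ rd.Wint lam) {γ : V} (hγ : γ ∈ rd.Δint lam) :
    w γ ∈ rd.Δint lam := by
  obtain ⟨hγΔ, n, hn⟩ := hγ
  have hwinv := (rd.inv_mem_Wint lam hw).2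
  obtain ⟨m, hm⟩ := hwinv γ hγΔ
  have h := rd.pair_apply_apply_of_mem_W (inv_mem hw.1) (w γ) lam
  rw [show w⁻¹ (w γ) = γ from w.symm_apply_apply γ] at h
  refine ⟨rd.apply_mem_Δ_of_mem_W hw.1 hγΔ, n + m, ?_⟩
  rw [← h, show w⁻¹ lam = lam + (w⁻¹ lam - lam) by abel, pair_add, hn, hm]
  push_cast
  rfl

end IntegralWeylGroup

section RootForm

def rootForm (x y : V) : ℝ := ∑ δ ∈ rd.finite.toFinset, (rd.pair δ x).re * (rd.pair δ y).re

lemma rootForm_comm (x y : V) : rd.rootForm x y = rd.rootForm y x :=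
  Finset.sum_congr rfl fun _ _ => mul_comm _ _

lemma rootForm_s_s {α : V} (hα : α ∈ rd.Δ) (x y : V) :
    rd.rootForm (rd.s α x) (rd.s α y) = rd.rootForm x y := by
  have hmem : ∀ δ ∈ rd.finite.toFinset, rd.s α δ ∈ rd.finite.toFinset := fun δ hδ =>
    rd.finite.mem_toFinset.2 (rd.s_mem hα (rd.finite.mem_toFinset.1 hδ))
  refine Finset.sum_nbij' (rd.s α) (rd.s α) hmem hmem (fun δ _ => rd.s_s α δ)
    (fun δ _ => rd.s_s α δ) fun δ _ => ?_
  rw [← pair_s, ← pair_s]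

lemma two_mul_rootForm {α β : V} (hα : α ∈ rd.Δ) {c : ℤ} (hc : rd.pair α β = c) :
    2 * rd.rootForm α β = c * rd.rootForm α α := by
  have h := rd.rootForm_s_s hα α β
  rw [s_self rd hα, s_apply, hc] at h
  simp only [rootForm, pair_neg, pair_sub, pair_smul, Complex.neg_re, Complex.sub_re,
    Complex.mul_re, Complex.intCast_re, Complex.intCast_im, zero_mul, sub_zero] at h
  simp only [rootForm, Finset.mul_sum]
  rw [← sub_eq_zero, ← Finset.sum_sub_distrib] at h ⊢
  rw [← neg_eq_zero, ← h, ← Finset.sum_neg_distrib]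
  exact Finset.sum_congr rfl fun _ _ => by ring

lemma rootForm_self_pos {α : V} (hα : α ∈ rd.Δ) : 0 < rd.rootForm α α :=
  calc (0 : ℝ) < (rd.pair α α).re * (rd.pair α α).re := by rw [pair_self rd hα]; norm_num
    _ ≤ rd.rootForm α α :=
      Finset.single_le_sum (f := fun δ => (rd.pair δ α).re * (rd.pair δ α).re)
        (fun _ _ => mul_self_nonneg _) (rd.finite.mem_toFinset.2 hα)

lemma rootForm_sq_le (x y : V) : rd.rootForm x y ^ 2 ≤ rd.rootForm x x * rd.rootForm y y := by
  simpa only [rootForm, sq] using Finset.sum_mul_sq_le_sq_mul_sq rd.finite.toFinset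
    (fun δ => (rd.pair δ x).re) (fun δ => (rd.pair δ y).re)

end RootForm

/- If `⟨α̌,β⟩⟨β̌,α⟩ = 4` but `β ∉ ℂα`, then `d = ⟨α̌,β⟩α - 2β ≠ 0` is fixed by `s_α` and `s_β`,
and `s_α s_β` translates `β` by `d`, producing infinitely many roots `β + n d`. -/
lemma exists_eq_smul_of_pair_mul_pair_eq_four {α β : V} (hα : α ∈ rd.Δ) (hβ : β ∈ rd.Δ)
    {c c' : ℤ} (hc : rd.pair α β = c) (hc' : rd.pair β α = c') (h4 : c * c' = 4) :
    ∃ t : ℂ, β = t • α := by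
  by_contra! hind
  set d : V := (c : ℂ) • α - (2 : ℂ) • β with hd
  have hd0 : d ≠ 0 := fun h => hind ((c : ℂ) / 2) <| by
    rw [hd, sub_eq_zero] at h
    rw [div_eq_inv_mul, mul_smul, h, smul_smul]
    norm_num
  have hsαd : rd.s α d = d := by
    rw [s_apply, hd, pair_sub, pair_smul, pair_smul, hc, pair_self rd hα]
    module
  have hsβd : rd.s β d = d := by
    have h4' : (c : ℂ) * c' = 4 := by exact_mod_cast h4
    rw [s_apply, hd, pair_sub, pair_smul, pair_smul, hc', pair_self rd hβ]
    linear_combination (norm := module) (-h4') • β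
  have hstep : ∀ n : ℕ, rd.s α (rd.s β (β + (n : ℂ) • d)) = β + ((n + 1 : ℕ) : ℂ) • d := by
    intro n
    rw [map_add, map_smul, hsβd, map_add, map_smul, hsαd, s_self rd hβ, map_neg, s_apply, hc, hd]
    push_cast
    module
  have hmem : ∀ n : ℕ, β + (n : ℂ) • d ∈ rd.Δ := by
    intro n
    induction n with
    | zero => simpa using hβ
    | succ n ih => exact hstep n ▸ rd.s_mem hα (rd.s_mem hβ ih)
  have hinj : Function.Injective fun n : ℕ => β + (n : ℂ) • d := fun m n h => by
    simpa [hd0] using h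
  exact rd.finite.not_infinite (Set.infinite_of_injective_forall_mem hinj hmem)

lemma pair_pos_and_mul_lt_four {α β : V} (hα : α ∈ rd.Δ) (hβ : β ∈ rd.Δ)
    (hind : ∀ t : ℂ, β ≠ t • α) {c c' : ℤ} (hc : rd.pair α β = c) (hc' : rd.pair β α = c')
    (hc0 : 0 < c) : 0 < c' ∧ c * c' < 4 := by
  have h1 := rd.two_mul_rootForm hα hc
  have h2 := rd.two_mul_rootForm hβ hc'
  rw [rootForm_comm] at h2
  have hA := rd.rootForm_self_pos hα
  have hB := rd.rootForm_self_pos hβ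
  have hCS := rd.rootForm_sq_le α β
  have hc0' : (0 : ℝ) < c := by exact_mod_cast hc0
  have hc'0 : 0 < c' := by
    have : (0 : ℝ) < c' * rd.rootForm β β := by nlinarith
    exact_mod_cast pos_of_mul_pos_left this hB.le
  have hprod : ((c * c' : ℤ) : ℝ) * (rd.rootForm α α * rd.rootForm β β) =
      4 * rd.rootForm α β ^ 2 := by
    push_cast
    linear_combination (-(c' * rd.rootForm β β)) * h1 - (2 * rd.rootForm α β) * h2
  have hle : c * c' ≤ 4 := by
    have h : ((c * c' : ℤ) : ℝ) * (rd.rootForm α α * rd.rootForm β β) ≤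
        (4 : ℤ) * (rd.rootForm α α * rd.rootForm β β) := by
      rw [hprod]
      push_cast
      linarith
    exact_mod_cast le_of_mul_le_mul_right h (mul_pos hA hB)
  refine ⟨hc'0, hle.lt_of_ne fun h4 => ?_⟩
  obtain ⟨t, ht⟩ := rd.exists_eq_smul_of_pair_mul_pair_eq_four hα hβ hc hc' h4
  exact hind t ht

section Subsystem

variable {Φ : Set V}

lemma neg_mem_of_s_mem (hΦ : Φ ⊆ rd.Δ) (hrefl : ∀ x ∈ Φ, ∀ y ∈ Φ, rd.s x y ∈ Φ) {α : V}
    (hα : α ∈ Φ) : -α ∈ Φ :=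
  rd.s_self (hΦ hα) ▸ hrefl α hα α hα

lemma sub_mem_of_pair_pos (hΦ : Φ ⊆ rd.Δ) (hrefl : ∀ x ∈ Φ, ∀ y ∈ Φ, rd.s x y ∈ Φ)
    {α β : V} (hα : α ∈ Φ) (hβ : β ∈ Φ) (hind : ∀ t : ℂ, β ≠ t • α) {c : ℤ}
    (hc : rd.pair α β = c) (hc0 : 0 < c) : β - α ∈ Φ := by
  obtain ⟨c', hc'⟩ := rd.pair_int β (hΦ hβ) α (hΦ hα)
  obtain ⟨hc'0, hlt⟩ := rd.pair_pos_and_mul_lt_four (hΦ hα) (hΦ hβ) hind hc hc' hc0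
  obtain h1 | h1 : c = 1 ∨ c' = 1 := by
    by_contra! h
    have : 2 ≤ c := by omega
    have : 2 ≤ c' := by omega
    nlinarith
  · simpa [s_apply, hc, h1] using hrefl α hα β hβ
  · have := rd.neg_mem_of_s_mem hΦ hrefl (hrefl β hβ α hα)
    simpa [s_apply, pair, hc', h1] using this

/- The `α`-string through `γ` is unbroken: its first half is built by adding `α` while
`⟨α̌, ·⟩ < 0`, and `s_α` reverses the string. Only reflections are used, so the string stays in
any reflection-closed `Φ`, such as `Δ_λ`, which is not closed under addition. -/
lemma add_nsmul_mem_of_pair_eq_neg (hΦ : Φ ⊆ rd.Δ) (hrefl : ∀ x ∈ Φ, ∀ y ∈ Φ, rd.s x y ∈ Φ)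
    {α γ : V} (hα : α ∈ Φ) (hγ : γ ∈ Φ) (hind : ∀ t : ℂ, γ ≠ t • α) {n : ℕ}
    (hn : rd.pair α γ = -n) {k : ℕ} (hk : k ≤ n) : γ + (k : ℂ) • α ∈ Φ := by
  have hpair : ∀ j : ℕ, rd.pair α (γ + (j : ℂ) • α) = 2 * j - n := fun j => by
    rw [pair_add, pair_smul, pair_self rd (hΦ hα), hn]
    ring
  have hhalf : ∀ j : ℕ, 2 * j ≤ n → γ + (j : ℂ) • α ∈ Φ := by
    intro j hj
    induction j with
    | zero => simpa using hγ
    | succ j ih =>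
      have hpos : rd.pair (-α) (γ + (j : ℂ) • α) = ((n - 2 * j : ℤ) : ℂ) := by
        rw [pair_neg_left, hpair]
        push_cast
        ring
      have hind' : ∀ t : ℂ, γ + (j : ℂ) • α ≠ t • -α := fun t h =>
        hind (-t - j) (by rw [sub_smul, neg_smul, ← smul_neg, ← h]; module)
      have := rd.sub_mem_of_pair_pos hΦ hrefl (rd.neg_mem_of_s_mem hΦ hrefl hα) (ih (by omega))
        hind' hpos (by omega)
      convert this using 1
      push_cast
      module
  rcases le_total (2 * k) n with h | h
  · exact hhalf k h
  · convert hrefl α hα _ (hhalf (n - k) (by omega)) using 1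
    rw [s_apply, hpair]
    push_cast [Nat.cast_sub hk]
    module

end Subsystem

lemma eq_of_smul_mem_Δ {α : V} (hα : α ∈ rd.Δ) {t : ℂ} (ht : t • α ∈ rd.Δ) :
    t = 1 ∨ t = -1 ∨ t = 2 ∨ t = -2 ∨ t = 2⁻¹ ∨ t = -2⁻¹ := by
  have ht0 : t ≠ 0 := by
    rintro rfl
    exact rd.zero_not_mem (zero_smul ℂ α ▸ ht)
  obtain ⟨n, hn⟩ := rd.pair_int α hα _ ht
  obtain ⟨m, hm⟩ := rd.pair_int _ ht α hα
  have hn' : 2 * t = n := by rw [← pair, pair_smul, pair_self rd hα] at hn; linear_combination hn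
  have hm' : 2 = m * t := by
    rw [← pair, pair_smul_left rd α ht0, pair_self rd hα] at hm
    field_simp at hm
    linear_combination hm
  have hnm : n * m = 4 := by
    exact_mod_cast (by linear_combination (-(m : ℂ)) * hn' - 2 * hm' : (n : ℂ) * m = 4)
  have htn : t = n / 2 := by linear_combination hn' / 2
  have hn4 : n ∣ 4 := ⟨m, hnm.symm⟩
  have hn_le : n ≤ 4 := Int.le_of_dvd (by norm_num) hn4
  have hn_ge : -4 ≤ n := by linarith [Int.le_of_dvd (by norm_num) (neg_dvd.2 hn4)]
  subst htn
  interval_cases n <;> first | omega | norm_num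

lemma eq_of_smul_mem_Pos {α : V} (hα : α ∈ rd.Pos) {t : ℂ} (ht : t • α ∈ rd.Pos) :
    t = 1 ∨ t = 2 ∨ t = 2⁻¹ := by
  have hαΔ := rd.pos_subset hα
  rcases rd.eq_of_smul_mem_Δ hαΔ (rd.pos_subset ht) with h | h | h | h | h | h <;> subst h
  · exact Or.inl rfl
  · exact absurd (by simpa using ht) (rd.pos_not_neg α hα)
  · exact Or.inr (Or.inl rfl)
  · have h : (-2 : ℂ) • α + α = -α := by module
    exact absurd (h ▸ rd.pos_closed _ ht α hα (h ▸ rd.neg_mem α hαΔ)) (rd.pos_not_neg α hα)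
  · exact Or.inr (Or.inr rfl)
  · have h : α + (-2⁻¹ : ℂ) • α = -((-2⁻¹ : ℂ) • α) := by module
    exact absurd (h ▸ rd.pos_closed α hα _ ht (h ▸ rd.neg_mem _ (rd.pos_subset ht)))
      (rd.pos_not_neg _ ht)

variable (lam : V)

/- If `⟨α̌,γ⟩ = -n ≤ 0`, the whole `α`-string `γ, γ + α, …, γ + nα = s_α γ` is positive.
If `⟨α̌,γ⟩ = n > 0` and `s_α γ = γ - nα` were negative, the string would change sign between
some `γ - kα` and `γ - (k+1)α`, decomposing `α` as a sum of two positive integral roots. -/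
lemma s_mem_Pos_of_mem_SimpleInt {α : V} (hα : α ∈ rd.SimpleInt lam) {γ : V}
    (hγ : γ ∈ rd.PosInt lam) (hind : ∀ t : ℂ, γ ≠ t • α) : rd.s α γ ∈ rd.Pos := by
  obtain ⟨⟨hαP, hαΦ⟩, hαdec⟩ := hα
  obtain ⟨hγP, hγΦ⟩ := hγ
  have hΦ : rd.Δint lam ⊆ rd.Δ := fun _ h => h.1
  have hrefl : ∀ x ∈ rd.Δint lam, ∀ y ∈ rd.Δint lam, rd.s x y ∈ rd.Δint lam :=
    fun _ hx _ hy => rd.s_mem_Δint lam hx hy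
  obtain ⟨c, hc⟩ := rd.pair_int α hαΦ.1 γ hγΦ.1
  rcases le_or_gt c 0 with hc0 | hc0
  · obtain ⟨n, rfl⟩ := Int.exists_eq_neg_ofNat hc0
    have hpos : ∀ k ≤ n, γ + (k : ℂ) • α ∈ rd.Pos := by
      intro k hk
      induction k with
      | zero => simpa using hγP
      | succ k ih =>
        have hmem := hΦ <|
          rd.add_nsmul_mem_of_pair_eq_neg hΦ hrefl hαΦ hγΦ hind (by exact_mod_cast hc) hk
        have h : γ + ((k + 1 : ℕ) : ℂ) • α = (γ + (k : ℂ) • α) + α := by push_cast; module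
        rw [h] at hmem ⊢
        exact rd.pos_closed _ (ih (by omega)) α hαP hmem
    have h := hpos n le_rfl
    rwa [s_apply, show rd.pair α γ = -(n : ℂ) by exact_mod_cast hc, neg_smul, sub_neg_eq_add]
  · obtain ⟨n, rfl⟩ := Int.eq_ofNat_of_zero_le hc0.le
    have hind' : ∀ t : ℂ, γ ≠ t • -α := fun t h => hind (-t) (by rw [h]; module)
    have hsub : ∀ k ≤ n, γ - (k : ℂ) • α ∈ rd.Δint lam := fun k hk => by
      simpa [sub_eq_add_neg] using rd.add_nsmul_mem_of_pair_eq_neg hΦ hrefl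
        (rd.neg_mem_Δint lam hαΦ) hγΦ hind'
        (by rw [pair_neg_left, pair, hc]; push_cast; rfl) hk
    by_contra hneg
    obtain ⟨k, hk, hk1⟩ := Nat.exists_not_and_succ_of_not_zero_of_exists
      (p := fun k => k ≤ n → γ - (k : ℂ) • α ∉ rd.Pos) (by simpa using hγP)
      ⟨n, fun _ => by rwa [s_apply, pair, hc] at hneg⟩
    simp only [Classical.not_imp, not_not] at hk
    have hkn : k < n := hk.1.lt_of_ne fun h => hneg <| by
      rw [s_apply, pair, hc, ← h]
      exact hk.2
    have hk1P := (rd.pos_total _ (hsub (k + 1) hkn).1).resolve_left (hk1 hkn)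
    refine hαdec ⟨_, ⟨hk.2, hsub k hk.1⟩, _, ⟨hk1P, rd.neg_mem_Δint lam (hsub (k + 1) hkn)⟩, ?_⟩
    push_cast
    module

lemma lenInt_lt_lenInt_s_mul {α : V} (hα : α ∈ rd.SimpleInt lam) {w : V ≃ₗ[ℂ] V}
    (hw : w ∈ rd.Wint lam) (hpos : w⁻¹ α ∈ rd.Pos) :
    rd.lenInt lam w < rd.lenInt lam (rd.s α * w) := by
  have hαP := hα.1.1
  have hwδ : w (w⁻¹ α) = α := w.apply_symm_apply α
  have hδ : w⁻¹ α ∈ rd.PosInt lam :=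
    ⟨hpos, rd.apply_mem_Δint lam (rd.inv_mem_Wint lam hw) hα.1.2⟩
  refine Set.ncard_lt_ncard ((Set.ssubset_iff_of_subset ?_).2 ⟨w⁻¹ α, ⟨hδ, ?_⟩, ?_⟩)
    (rd.finite.subset fun β hβ => hβ.1.1 |> rd.pos_subset)
  · rintro β ⟨hβ, hneg⟩
    refine ⟨hβ, ?_⟩
    change -rd.s α (w β) ∈ rd.Pos
    by_cases hprop : ∃ t : ℂ, -w β = t • α
    · obtain ⟨t, ht⟩ := hprop
      have hwβ : w β = (-t) • α := by rw [neg_smul, ← ht, neg_neg]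
      have hβδ : β = (-t) • w⁻¹ α := by
        rw [← map_smul, ← hwβ]
        exact (w.symm_apply_apply β).symm
      have h1 := rd.eq_of_smul_mem_Pos hαP (ht ▸ hneg)
      have h2 := rd.eq_of_smul_mem_Pos hpos (hβδ ▸ hβ.1)
      rcases h1 with rfl | rfl | rfl <;> norm_num at h2
    · simp only [not_exists] at hprop
      have hmem : -w β ∈ rd.PosInt lam :=
        ⟨hneg, rd.neg_mem_Δint lam (rd.apply_mem_Δint lam hw hβ.2)⟩
      simpa using rd.s_mem_Pos_of_mem_SimpleInt lam hα hmem hprop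
  · change -rd.s α (w (w⁻¹ α)) ∈ rd.Pos
    rwa [hwδ, s_self rd hα.1.2.1, neg_neg]
  · rintro ⟨-, h⟩
    rw [hwδ] at h
    exact rd.pos_not_neg α hαP h

lemma lenInt_s_mul_ne {α : V} (hα : α ∈ rd.SimpleInt lam) {w : V ≃ₗ[ℂ] V}
    (hw : w ∈ rd.Wint lam) : rd.lenInt lam (rd.s α * w) ≠ rd.lenInt lam w := by
  have hαΔ := hα.1.2.1
  rcases rd.pos_total _ (rd.apply_mem_Δ_of_mem_W (inv_mem hw.1) hαΔ) with h | h
  · exact (rd.lenInt_lt_lenInt_s_mul lam hα hw h).ne'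
  · have hsw := rd.mul_mem_Wint lam (rd.s_mem_Wint lam hα.1.2) hw
    have h' : (rd.s α * w)⁻¹ α ∈ rd.Pos := by
      rwa [mul_inv_rev, s_inv, LinearEquiv.mul_apply, s_self rd hαΔ, map_neg]
    have := rd.lenInt_lt_lenInt_s_mul lam hα hsw h'
    rw [s_mul_s_mul] at this
    exact this.ne

end Paper.RootDatum

open Paper CategoryTheory

universe u v w'

/- At most one of `μ`, `s_α μ` has `⟨α̌, ·⟩ ∈ ℤ_{<0}`; (A2) applies to the other. -/
lemma Paper.RootDatum.nonempty_iso_s_of_iso_s_mul {C : Type*} [Category C] {V : Type}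
    [AddCommGroup V] [Module ℂ V] (rd : RootDatum V) (M : (V ≃ₗ[ℂ] V) → V → C) (D : Set V)
    {α : V} (hα : α ∈ rd.Δ) (v : V ≃ₗ[ℂ] V)
    (hA2 : ∀ ν ∈ D, ¬ rd.pairNegInt α ν → Nonempty (M (rd.s α * v) ν ≅ M v (rd.s α ν)))
    (hsv : ∀ ν ∈ D, Nonempty (M (rd.s α * v) ν ≅ M v ν)) {μ : V} (hμ : μ ∈ D)
    (hsμ : rd.s α μ ∈ D) : Nonempty (M v μ ≅ M v (rd.s α μ)) := by
  by_cases hneg : rd.pairNegInt α μ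
  · obtain ⟨e⟩ := hA2 _ hsμ (rd.not_pairNegInt_s hα hneg)
    obtain ⟨i⟩ := hsv _ hsμ
    rw [rd.s_s] at e
    exact ⟨(i.symm ≪≫ e).symm⟩
  · obtain ⟨e⟩ := hA2 _ hμ hneg
    obtain ⟨i⟩ := hsv _ hμ
    exact ⟨i.symm ≪≫ e⟩

theorem statement3_general {C : Type u} [Category.{v} C]
    {V : Type} [AddCommGroup V] [Module ℂ V] (rd : RootDatum V)
    -- a dominant `λ ∈ 𝔥*`
    (lam : V)
    -- a `W_λ`-stable subset `𝒟 ⊆ 𝔥*`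
    (D : Set V) (hD : ∀ w ∈ rd.Wint lam, ∀ μ ∈ D, w μ ∈ D)
    -- the family of objects `M_λ(w, μ)` of `𝒞`
    (M : (V ≃ₗ[ℂ] V) → V → C)
    -- (A1)  `M_λ(ww',μ) ≅ M_λ(w,μ)` for `w ∈ W_λ`, `w' ∈ W_λ⁰`
    (hA1 : ∀ w ∈ rd.Wint lam, ∀ w' ∈ rd.Wint0 lam, ∀ μ ∈ D,
      Nonempty (M (w * w') μ ≅ M w μ))
    -- (A2)  for `α ∈ Π_λ` with `s_α w > w`, if `⟨α̌,μ⟩ ∉ ℤ_{<0}` then `M_λ(s_α w,μ) ≅ M_λ(w,s_α μ)`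
    (hA2 : ∀ α ∈ rd.SimpleInt lam, ∀ w ∈ rd.Wint lam,
      rd.lenInt lam (rd.s α * w) > rd.lenInt lam w → ∀ μ ∈ D, ¬ rd.pairNegInt α μ →
      Nonempty (M (rd.s α * w) μ ≅ M w (rd.s α μ)))
    (α : V) (hα : α ∈ rd.SimpleInt lam) (w : V ≃ₗ[ℂ] V) (hw : w ∈ rd.Wint lam)
    (μ : V) (hμ : μ ∈ D) (hzero : rd.B α (w lam) = 0) :
    Nonempty (M w μ ≅ M w (rd.s α μ)) ∧
    Nonempty (M w μ ≅ M (rd.s α * w) μ) ∧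
    Nonempty (M w μ ≅ M (rd.s α * w) (rd.s α μ)) := by
  have hαΔ : α ∈ rd.Δint lam := hα.1.2
  have hsw : rd.s α * w ∈ rd.Wint lam := rd.mul_mem_Wint lam (rd.s_mem_Wint lam hαΔ) hw
  have hsμ : rd.s α μ ∈ D := hD _ (rd.s_mem_Wint lam hαΔ) μ hμ
  -- `w = (s_α w) u` with `u = w⁻¹ s_α w ∈ W_λ⁰`, because `s_α` fixes `wλ`
  have hA1sw : ∀ ν ∈ D, Nonempty (M w ν ≅ M (rd.s α * w) ν) := fun ν hν => by
    have h := hA1 _ hsw _ (rd.inv_mul_s_mul_mem_Wint0 lam hαΔ hw hzero) ν hν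
    rwa [← mul_assoc, mul_inv_cancel_right, rd.s_mul_s_mul] at h
  have hA1w : ∀ ν ∈ D, Nonempty (M (rd.s α * (rd.s α * w)) ν ≅ M (rd.s α * w) ν) :=
    fun ν hν => by rw [rd.s_mul_s_mul]; exact hA1sw ν hν
  obtain ⟨e⟩ : Nonempty (M w μ ≅ M w (rd.s α μ)) := by
    rcases (rd.lenInt_s_mul_ne lam hα hw).lt_or_gt with h | h
    · replace h : rd.lenInt lam (rd.s α * (rd.s α * w)) > rd.lenInt lam (rd.s α * w) := by
        rwa [rd.s_mul_s_mul]
      obtain ⟨e⟩ := rd.nonempty_iso_s_of_iso_s_mul M D hαΔ.1 (rd.s α * w)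
        (hA2 α hα _ hsw h) hA1w hμ hsμ
      obtain ⟨i⟩ := hA1sw μ hμ
      obtain ⟨j⟩ := hA1sw _ hsμ
      exact ⟨i ≪≫ e ≪≫ j.symm⟩
    · exact rd.nonempty_iso_s_of_iso_s_mul M D hαΔ.1 w (hA2 α hα w hw h)
        (fun ν hν => (hA1sw ν hν).map Iso.symm) hμ hsμ
  obtain ⟨i⟩ := hA1sw μ hμ
  obtain ⟨j⟩ := hA1sw _ hsμ
  exact ⟨⟨e⟩, ⟨i⟩, ⟨e ≪≫ j⟩⟩

/-- Lemma 2.2. Under (A1)–(A5), if `α ∈ Π_λ`, `w ∈ W_λ`, `μ ∈ 𝒟` and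
`⟨α, wλ⟩ = 0`, then `M_λ(w,μ) ≅ M_λ(w,s_α μ) ≅ M_λ(s_α w,μ) ≅ M_λ(s_α w,s_α μ)`. -/
theorem statement3 {C : Type u} [Category.{v} C] [Abelian C] [EnoughInjectives C] [HasExt.{w'} C]
    {V : Type} [AddCommGroup V] [Module ℂ V] (rd : RootDatum V)
    -- a dominant `λ ∈ 𝔥*`
    (lam : V) (hdom : rd.IsDominant lam)
    -- the longest element `w_λ` of `W_λ`
    (wl : V ≃ₗ[ℂ] V) (hwl : rd.IsLongest lam wl)
    -- a `W_λ`-stable subset `𝒟 ⊆ 𝔥*`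
    (D : Set V) (hD : ∀ w ∈ rd.Wint lam, ∀ μ ∈ D, w μ ∈ D)
    -- the family of objects `M_λ(w, μ)` of `𝒞`
    (M : (V ≃ₗ[ℂ] V) → V → C)
    -- (A1)  `M_λ(ww',μ) ≅ M_λ(w,μ)` for `w ∈ W_λ`, `w' ∈ W_λ⁰`
    (hA1 : ∀ w ∈ rd.Wint lam, ∀ w' ∈ rd.Wint0 lam, ∀ μ ∈ D,
      Nonempty (M (w * w') μ ≅ M w μ))
    -- (A2)  for `α ∈ Π_λ` with `s_α w > w`, if `⟨α̌,μ⟩ ∉ ℤ_{<0}` then `M_λ(s_α w,μ) ≅ M_λ(w,s_α μ)`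
    (hA2 : ∀ α ∈ rd.SimpleInt lam, ∀ w ∈ rd.Wint lam,
      rd.lenInt lam (rd.s α * w) > rd.lenInt lam w → ∀ μ ∈ D, ¬ rd.pairNegInt α μ →
      Nonempty (M (rd.s α * w) μ ≅ M w (rd.s α μ)))
    -- (A3)  for `α ∈ Π_λ` with `s_α w > w`, `⟨α,wλ⟩ ≠ 0` and `⟨α̌,μ⟩ ∈ ℤ_{<0}`, an exact sequence
    --       `0 → M_λ(w,μ) → M_λ(s_α w,μ) → M_λ(w,s_α μ) → M_λ(w,μ) → 0`
    (hA3 : ∀ α ∈ rd.SimpleInt lam, ∀ w ∈ rd.Wint lam,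
      rd.lenInt lam (rd.s α * w) > rd.lenInt lam w → rd.B α (w lam) ≠ 0 →
      ∀ μ ∈ D, rd.pairNegInt α μ →
      ∃ (f : M w μ ⟶ M (rd.s α * w) μ) (g : M (rd.s α * w) μ ⟶ M w (rd.s α μ))
        (h : M w (rd.s α μ) ⟶ M w μ) (w1 : f ≫ g = 0) (w2 : g ≫ h = 0),
        Mono f ∧ Epi h ∧ (ShortComplex.mk f g w1).Exact ∧ (ShortComplex.mk g h w2).Exact)
    -- (A4)  `Hom(M_λ(w_λ,μ'), M_λ(e,μ)) ≠ 0  ↔  μ ∈ W_λ⁰ w_λ μ'`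
    (hA4 : ∀ μ' ∈ D, ∀ μ ∈ D,
      (∃ f : M wl μ' ⟶ M 1 μ, f ≠ 0) ↔ ∃ u ∈ rd.Wint0 lam, μ = (u * wl) μ')
    -- (A5)  `Ext^k(M_λ(w_λ,μ'), M_λ(e,μ)) = 0` for `k > 0`
    (hA5 : ∀ μ' ∈ D, ∀ μ ∈ D, ∀ k : ℕ, 0 < k →
      ∀ e : Abelian.Ext (M wl μ') (M 1 μ) k, e = 0)
    (α : V) (hα : α ∈ rd.SimpleInt lam) (w : V ≃ₗ[ℂ] V) (hw : w ∈ rd.Wint lam)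
    (μ : V) (hμ : μ ∈ D) (hzero : rd.B α (w lam) = 0) :
    Nonempty (M w μ ≅ M w (rd.s α μ)) ∧
    Nonempty (M w μ ≅ M (rd.s α * w) μ) ∧
    Nonempty (M w μ ≅ M (rd.s α * w) (rd.s α μ)) :=
  statement3_general rd lam D hD M hA1 hA2 α hα w hw μ hμ hzero
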